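/- With λ ∈ ℤⁿ₊, p = ⌊#λ/2⌋, and R_θ(λ) as in the construction: for every θ ∈ {0,1}^p the integer z(λ) − z(R_θ(λ)) is even and nonnegative, #λ − z(λ) is even and nonnegative, and Σ_{θ ∈ {0,1}^p} 2^{(z(λ) − z(R_θ(λ)))/2} = 2^{(#λ − z(λ))/2} · 3^{⌊z(λ)/2⌋}. -/

import Mathlib

/-- `cnt l m` is the number of indices `r` with `l r = m`. -/
def cnt {n : ℕ} (l : Fin n → ℤ) (m : ℤ) : ℕ :=
  (Finset.univ.filter fun r => l r = m).card

/-- The degree of atypicality `#λ = n − Σ_{m ≥ 1} |c_m(λ) − c_{−m}(λ)|`. -/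
def atyp {n : ℕ} (l : Fin n → ℤ) : ℕ :=
  n - ∑ m ∈ Finset.Icc 1 (Finset.univ.sup fun r => (l r).natAbs),
        ((cnt l (m : ℤ) : ℤ) - (cnt l (-(m : ℤ)) : ℤ)).natAbs

/-- `λ ∈ ℤⁿ₊`: weakly decreasing, and any repeated value is zero. -/
def ZPlus {n : ℕ} (l : Fin n → ℤ) : Prop :=
  Antitone l ∧ ∀ r s : Fin n, r < s → l r = l s → l r = 0

/-- `z(λ)`, the number of zero entries of `λ`. -/
def zcount {n : ℕ} (l : Fin n → ℤ) : ℕ :=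
  (Finset.univ.filter fun r => l r = 0).card

/-- `ν_θ = λ + Σ_q θ_q k_q (δ_{r_q} − δ_{s_q})`. -/
def nu {n p : ℕ} (l : Fin n → ℤ) (r s : Fin p → Fin n) (k : Fin p → ℕ)
    (θ : Fin p → Bool) : Fin n → ℤ := fun t =>
  l t + ∑ q : Fin p, (if θ q then (k q : ℤ) else 0) *
      ((if r q = t then 1 else 0) - (if s q = t then 1 else 0))

/-! Write `#λ = z(λ) + 2A` with `A = Σ_{m ≥ 1} min (c_m(λ), c_{-m}(λ))`. The `p` chosen pairs
split into pairs `(m, -m)` with `m > 0`, at most `A` of them because nonzero entries of `λ` are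
distinct, and pairs of zeros, at most `⌊z(λ)/2⌋` of them. As `p = A + ⌊z(λ)/2⌋`, exactly
`⌊z(λ)/2⌋` pairs are zero pairs. Since every `k_q` is positive, `ν_θ` loses precisely the two
zeros of each zero pair with `θ_q = 1`, so `z(λ) - z(R_θ(λ))` is twice their number, and the
sum over `θ` factors into `3` per zero pair and `2` per other pair. -/

open Finset Function

lemma ZPlus.eq_of_apply_eq {n : ℕ} {l : Fin n → ℤ} (hl : ZPlus l) {a b : Fin n}
    (h : l a = l b) (h0 : l a ≠ 0) : a = b := by
  by_contra hab
  rcases lt_or_gt_of_ne hab with hlt | hlt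
  · exact h0 (hl.2 a b hlt h)
  · exact h0 (h ▸ hl.2 b a hlt h.symm)

lemma StrictMono.lt_of_strictAnti {α β : Type*} [LinearOrder α] [Preorder β] {r s : α → β}
    (hr : StrictMono r) (hs : StrictAnti s) (hrs : ∀ q, r q < s q) (q q' : α) : r q < s q' := by
  rcases le_or_gt q q' with h | h
  · exact (hr.monotone h).trans_lt (hrs q')
  · exact (hrs q).trans (hs h)

def maxAbs {n : ℕ} (l : Fin n → ℤ) : ℕ :=
  univ.sup fun r => (l r).natAbs

def oppositePairs {n : ℕ} (l : Fin n → ℤ) : ℕ :=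
  ∑ m ∈ Icc 1 (maxAbs l), min (cnt l m) (cnt l (-m))

lemma card_eq_zcount_add_sum_cnt {n : ℕ} (l : Fin n → ℤ) :
    n = zcount l + ∑ m ∈ Icc 1 (maxAbs l), (cnt l m + cnt l (-m)) := by
  have hmaps : Set.MapsTo (fun t => (l t).natAbs) (univ : Finset (Fin n)) (Icc 0 (maxAbs l)) :=
    fun t _ => mem_Icc.2 ⟨Nat.zero_le _, le_sup (f := fun t => (l t).natAbs) (mem_univ t)⟩
  have hfiber : ∀ m ∈ Icc 1 (maxAbs l),
      #{t | (l t).natAbs = m} = cnt l m + cnt l (-m) := by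
    intro m hm
    have hm : (m : ℤ) ≠ -m := by have := (mem_Icc.1 hm).1; omega
    simp only [Int.natAbs_eq_iff, filter_or, cnt]
    exact card_union_of_disjoint (disjoint_filter.2 fun t _ h h' => hm (h ▸ h'))
  have hzero : #{t | (l t).natAbs = 0} = zcount l := by simp [zcount]
  rw [← sum_congr rfl hfiber, ← hzero]
  conv_lhs => rw [← Fintype.card_fin n, ← card_univ, card_eq_sum_card_fiberwise hmaps,
    ← add_sum_Ioc_eq_sum_Icc (Nat.zero_le _), ← Icc_add_one_left_eq_Ioc, zero_add]

lemma atyp_eq_zcount_add {n : ℕ} (l : Fin n → ℤ) :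
    atyp l = zcount l + 2 * oppositePairs l := by
  have hsplit : ∑ m ∈ Icc 1 (maxAbs l), (cnt l m + cnt l (-m)) =
      ∑ m ∈ Icc 1 (maxAbs l), ((cnt l m : ℤ) - cnt l (-m)).natAbs + 2 * oppositePairs l := by
    rw [oppositePairs, mul_sum, ← sum_add_distrib]
    exact sum_congr rfl fun m _ => by omega
  have hn := card_eq_zcount_add_sum_cnt l
  rw [atyp, ← maxAbs]
  omega

section Pairing

variable {n p : ℕ} {l : Fin n → ℤ} {r s : Fin p → Fin n}

lemma card_image_union_image (hr : Injective r) (hs : Injective s) (hrs : ∀ q q', r q ≠ s q')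
    (S : Finset (Fin p)) : #(S.image r ∪ S.image s) = 2 * #S := by
  rw [card_union_of_disjoint, card_image_of_injective _ hr, card_image_of_injective _ hs, two_mul]
  simp only [disjoint_left, mem_image]
  rintro t ⟨q, _, rfl⟩ ⟨q', _, h⟩
  exact hrs q q' h.symm

lemma image_union_image_subset_zeros (hpair : ∀ q, l (r q) + l (s q) = 0) {S : Finset (Fin p)}
    (hS : ∀ q ∈ S, l (r q) = 0) :
    S.image r ∪ S.image s ⊆ ({t | l t = 0} : Finset (Fin n)) := by
  intro t ht
  simp only [mem_union, mem_image, mem_filter, mem_univ, true_and] at ht ⊢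
  rcases ht with ⟨q, hq, rfl⟩ | ⟨q, hq, rfl⟩
  · exact hS q hq
  · linarith [hS q hq, hpair q]

lemma card_pos_pairs_le_oppositePairs (hpair : ∀ q, l (r q) + l (s q) = 0)
    (hinj : Set.InjOn (fun q => l (r q)) {q | 0 < l (r q)}) :
    #{q | 0 < l (r q)} ≤ oppositePairs l := by
  set P : Finset (Fin p) := {q | 0 < l (r q)}
  set f : Fin p → ℕ := fun q => (l (r q)).toNat
  have hpos : ∀ q ∈ P, 0 < l (r q) := fun q hq => (mem_filter.1 hq).2
  have hmaps : Set.MapsTo f P (Icc 1 (maxAbs l)) := by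
    intro q hq
    have := hpos q hq
    have : (l (r q)).natAbs ≤ maxAbs l := le_sup (f := fun t => (l t).natAbs) (mem_univ (r q))
    simp only [f, coe_Icc, Set.mem_Icc]
    omega
  have hone : ∀ m ∈ P.image f, 1 ≤ min (cnt l m) (cnt l (-m)) := by
    simp only [mem_image]
    rintro _ ⟨q, hq, rfl⟩
    have hr : ((f q : ℕ) : ℤ) = l (r q) := Int.toNat_of_nonneg (hpos q hq).le
    simp only [cnt, le_min_iff, Nat.one_le_iff_ne_zero, ne_eq, card_eq_zero,
      filter_eq_empty_iff, not_forall, not_not, hr]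
    exact ⟨⟨r q, mem_univ _, rfl⟩, ⟨s q, mem_univ _, by linarith [hpair q]⟩⟩
  calc #P = #(P.image f) := by
        refine (card_image_of_injOn fun q hq q' hq' h => hinj (hpos q hq) (hpos q' hq') ?_).symm
        have := hpos q hq; have := hpos q' hq'
        simp only [f] at h ⊢
        omega
    _ = ∑ m ∈ P.image f, 1 := card_eq_sum_ones _
    _ ≤ ∑ m ∈ P.image f, min (cnt l m) (cnt l (-m)) := sum_le_sum hone
    _ ≤ oppositePairs l := sum_le_sum_of_subset (image_subset_iff.2 hmaps)

lemma card_zero_pairs_eq (hr : Injective r) (hs : Injective s) (hrs : ∀ q q', r q ≠ s q')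
    (hpair : ∀ q, l (r q) + l (s q) = 0) (hnonneg : ∀ q, 0 ≤ l (r q))
    (hinj : Set.InjOn (fun q => l (r q)) {q | 0 < l (r q)}) (hp : p = atyp l / 2) :
    #{q | l (r q) = 0} = zcount l / 2 := by
  have hzero : 2 * #{q | l (r q) = 0} ≤ zcount l := by
    rw [← card_image_union_image hr hs hrs]
    exact card_le_card (image_union_image_subset_zeros hpair fun q hq => (mem_filter.1 hq).2)
  have hpos := card_pos_pairs_le_oppositePairs hpair hinj
  have hsplit : #{q | 0 < l (r q)} + #{q | l (r q) = 0} = p := by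
    have : filter (fun q => l (r q) = 0) univ = filter (fun q => ¬ 0 < l (r q)) univ :=
      filter_congr fun q _ => by have := hnonneg q; omega
    rw [this, card_filter_add_card_filter_not, card_univ, Fintype.card_fin]
  have := atyp_eq_zcount_add l
  omega

variable (k : Fin p → ℕ) (θ : Fin p → Bool)

lemma nu_apply_left (hr : Injective r) (hrs : ∀ q q', r q ≠ s q') (q : Fin p) :
    nu l r s k θ (r q) = l (r q) + if θ q then (k q : ℤ) else 0 := by
  have hsr : ∀ q q', s q ≠ r q' := fun q q' h => hrs q' q h.symm
  rw [nu, sum_eq_single q]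
  · simp [hsr]
  · intro q' _ hq'
    simp [hr.ne hq', hsr]
  · simp

lemma nu_apply_right (hs : Injective s) (hrs : ∀ q q', r q ≠ s q') (q : Fin p) :
    nu l r s k θ (s q) = l (s q) - if θ q then (k q : ℤ) else 0 := by
  rw [nu, sum_eq_single q]
  · simp [hrs q q, sub_eq_add_neg]
  · intro q' _ hq'
    simp [hs.ne hq', hrs q' q]
  · simp

lemma nu_apply_of_ne {t : Fin n} (ht : ∀ q, r q ≠ t ∧ s q ≠ t) : nu l r s k θ t = l t := by
  simp [nu, ht]

lemma nu_eq_zero_iff (hr : Injective r) (hs : Injective s) (hrs : ∀ q q', r q ≠ s q')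
    (hpair : ∀ q, l (r q) + l (s q) = 0) (hnonneg : ∀ q, 0 ≤ l (r q)) (hk : ∀ q, 0 < k q)
    (t : Fin n) :
    nu l r s k θ t = 0 ↔ l t = 0 ∧
      t ∉ ({q | l (r q) = 0 ∧ θ q} : Finset (Fin p)).image r ∪
        ({q | l (r q) = 0 ∧ θ q} : Finset (Fin p)).image s := by
  have hsr : ∀ q q', s q ≠ r q' := fun q q' h => hrs q' q h.symm
  by_cases htr : ∃ q, r q = t
  · obtain ⟨q, rfl⟩ := htr
    have := hnonneg q; have := hk q
    rw [nu_apply_left k θ hr hrs]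
    cases hθ : θ q <;> simp [hr.eq_iff, hsr, hθ]
    omega
  by_cases hts : ∃ q, s q = t
  · obtain ⟨q, rfl⟩ := hts
    have := hnonneg q; have := hk q; have := hpair q
    rw [nu_apply_right k θ hs hrs]
    cases hθ : θ q <;> simp [hs.eq_iff, hrs, hθ]
    omega
  push Not at htr hts
  rw [nu_apply_of_ne k θ fun q => ⟨htr q, hts q⟩]
  simp [htr, hts]

lemma zcount_nu (hr : Injective r) (hs : Injective s) (hrs : ∀ q q', r q ≠ s q')
    (hpair : ∀ q, l (r q) + l (s q) = 0) (hnonneg : ∀ q, 0 ≤ l (r q)) (hk : ∀ q, 0 < k q) :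
    zcount (nu l r s k θ) = zcount l - 2 * #{q | l (r q) = 0 ∧ θ q} := by
  have hzeros : univ.filter (fun t => nu l r s k θ t = 0) =
      univ.filter (fun t => l t = 0) \ (({q | l (r q) = 0 ∧ θ q} : Finset (Fin p)).image r ∪
        ({q | l (r q) = 0 ∧ θ q} : Finset (Fin p)).image s) := by
    ext t
    simp only [mem_filter, mem_univ, true_and, mem_sdiff]
    exact nu_eq_zero_iff k θ hr hs hrs hpair hnonneg hk t
  rw [zcount, hzeros, card_sdiff_of_subset, card_image_union_image hr hs hrs, zcount]
  exact image_union_image_subset_zeros hpair fun q hq => (mem_filter.1 hq).2.1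

end Pairing

lemma zcount_eq_of_perm {n : ℕ} {f g : Fin n → ℤ} (π : Equiv.Perm (Fin n))
    (h : ∀ t, g t = f (π t)) : zcount g = zcount f :=
  card_equiv π fun t => by simp [h]

lemma sum_two_pow_card_filter {ι : Type*} [Fintype ι] [DecidableEq ι] (P : ι → Prop)
    [DecidablePred P] :
    ∑ θ : ι → Bool, 2 ^ #{i | P i ∧ θ i} = 3 ^ #{i | P i} * 2 ^ #{i | ¬ P i} := by
  have hterm : ∀ θ : ι → Bool,
      2 ^ #{i | P i ∧ θ i} = ∏ i, if P i then (if θ i then 2 else 1) else 1 := by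
    intro θ
    rw [prod_ite, prod_const_one, mul_one, prod_ite, prod_const, prod_const_one, mul_one,
      filter_filter]
  rw [sum_congr rfl fun θ _ => hterm θ,
    ← Fintype.prod_sum fun i (b : Bool) => if P i then (if b then 2 else 1) else 1]
  have hsum : ∀ i, ∑ b : Bool, (if P i then (if b then 2 else 1) else 1) =
      if P i then 3 else 2 := fun i => by
    split_ifs <;> rfl
  rw [prod_congr rfl fun i _ => hsum i, prod_ite, prod_const, prod_const]

theorem stmt3_general (n p : ℕ) (l : Fin n → ℤ) (hl : ZPlus l)
    (hp : p = atyp l / 2)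
    (r s : Fin p → Fin n) (hr : StrictMono r) (hs : StrictAnti s)
    (hrs : ∀ q, r q < s q) (hpair : ∀ q, l (r q) + l (s q) = 0)
    (I : ℕ → Set ℕ) (k : Fin p → ℕ)
    (hstep : ∀ q : Fin p,
      (0 < l (r q) ∧
        IsLeast {m : ℕ | 0 < m ∧ (l (r q) + (m : ℤ)).toNat ∉ I q.val} (k q) ∧
        I (q.val + 1) = insert (l (r q) + (k q : ℤ)).toNat (I q.val)) ∨
      (l (r q) = 0 ∧ ∃ k' : ℕ,
        ((Even (zcount l) ∧
            IsLeast {m : ℕ | 0 < m ∧ m ∉ I q.val} (k q) ∧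
            IsLeast {m : ℕ | 0 < m ∧ m ∉ I q.val ∧ m ≠ k q} k') ∨
         (¬ Even (zcount l) ∧
            IsLeast {m : ℕ | 0 < m ∧ m ∉ I q.val} k' ∧
            IsLeast {m : ℕ | 0 < m ∧ m ∉ I q.val ∧ m ≠ k'} (k q))) ∧
        I (q.val + 1) = insert (k q) (insert k' (I q.val))))
    (R : (Fin p → Bool) → Fin n → ℤ)
    (hR : ∀ θ, ZPlus (R θ) ∧
      ∃ π : Equiv.Perm (Fin n), ∀ t, R θ t = nu l r s k θ (π t)) :
    (∀ θ, zcount (R θ) ≤ zcount l ∧ Even (zcount l - zcount (R θ))) ∧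
    (zcount l ≤ atyp l ∧ Even (atyp l - zcount l)) ∧
    ∑ θ : Fin p → Bool, 2 ^ ((zcount l - zcount (R θ)) / 2) =
      2 ^ ((atyp l - zcount l) / 2) * 3 ^ (zcount l / 2) := by
  have hk : ∀ q, 0 < k q := fun q => by
    rcases hstep q with ⟨-, hmin, -⟩ | ⟨-, _, (⟨-, hmin, -⟩ | ⟨-, -, hmin⟩), -⟩ <;>
      exact hmin.1.1
  have hrs' : ∀ q q', r q ≠ s q' := fun q q' => (hr.lt_of_strictAnti hs hrs q q').ne
  have hnonneg : ∀ q, 0 ≤ l (r q) := fun q => by linarith [hl.1 (hrs q).le, hpair q]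
  have hinj : Set.InjOn (fun q => l (r q)) {q | 0 < l (r q)} := fun q hq q' _ h =>
    hr.injective (hl.eq_of_apply_eq h (ne_of_gt hq))
  have hzero := card_zero_pairs_eq hr.injective hs.injective hrs' hpair hnonneg hinj hp
  have hatyp := atyp_eq_zcount_add l
  have hzR : ∀ θ, zcount (R θ) = zcount l - 2 * #{q | l (r q) = 0 ∧ θ q} := fun θ => by
    obtain ⟨-, π, hπ⟩ := hR θ
    rw [zcount_eq_of_perm π hπ, zcount_nu k θ hr.injective hs.injective hrs' hpair hnonneg hk]
  have hle : ∀ θ : Fin p → Bool, #{q | l (r q) = 0 ∧ θ q} ≤ #{q | l (r q) = 0} :=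
    fun θ => card_le_card fun q hq => mem_filter.2 ⟨mem_univ q, (mem_filter.1 hq).2.1⟩
  have hexp : ∀ θ, (zcount l - zcount (R θ)) / 2 = #{q | l (r q) = 0 ∧ θ q} := fun θ => by
    have := hle θ; rw [hzR θ]; omega
  have hnonzero : #{q | ¬ l (r q) = 0} = (atyp l - zcount l) / 2 := by
    have := card_filter_add_card_filter_not (s := univ) fun q => l (r q) = 0
    rw [card_univ, Fintype.card_fin] at this
    omega
  refine ⟨fun θ => ?_, ⟨by omega, ⟨oppositePairs l, by omega⟩⟩, ?_⟩
  · have := hle θ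
    rw [hzR θ]
    exact ⟨by omega, ⟨#{q | l (r q) = 0 ∧ θ q}, by omega⟩⟩
  rw [sum_congr rfl fun θ _ => congrArg (2 ^ ·) (hexp θ), sum_two_pow_card_filter, hzero,
    hnonzero, mul_comm]

/-- in the construction of the Main Theorem, `z(λ) − z(R_θ(λ))`
is even and nonnegative, `#λ − z(λ)` is even and nonnegative, and
`Σ_θ 2^{(z(λ)−z(R_θ(λ)))/2} = 2^{(#λ−z(λ))/2}·3^{⌊z(λ)/2⌋}`. -/
theorem stmt3 (n p : ℕ) (l : Fin n → ℤ) (hl : ZPlus l)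
    (hp : p = atyp l / 2)
    (r s : Fin p → Fin n) (hr : StrictMono r) (hs : StrictAnti s)
    (hrs : ∀ q, r q < s q) (hpair : ∀ q, l (r q) + l (s q) = 0)
    (I : ℕ → Set ℕ) (k : Fin p → ℕ)
    (hI0 : I 0 = {m : ℕ | ∃ t : Fin n, (l t).natAbs = m})
    (hstep : ∀ q : Fin p,
      (0 < l (r q) ∧
        IsLeast {m : ℕ | 0 < m ∧ (l (r q) + (m : ℤ)).toNat ∉ I q.val} (k q) ∧
        I (q.val + 1) = insert (l (r q) + (k q : ℤ)).toNat (I q.val)) ∨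
      (l (r q) = 0 ∧ ∃ k' : ℕ,
        ((Even (zcount l) ∧
            IsLeast {m : ℕ | 0 < m ∧ m ∉ I q.val} (k q) ∧
            IsLeast {m : ℕ | 0 < m ∧ m ∉ I q.val ∧ m ≠ k q} k') ∨
         (¬ Even (zcount l) ∧
            IsLeast {m : ℕ | 0 < m ∧ m ∉ I q.val} k' ∧
            IsLeast {m : ℕ | 0 < m ∧ m ∉ I q.val ∧ m ≠ k'} (k q))) ∧
        I (q.val + 1) = insert (k q) (insert k' (I q.val))))
    (R : (Fin p → Bool) → Fin n → ℤ)
    (hR : ∀ θ, ZPlus (R θ) ∧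
      ∃ π : Equiv.Perm (Fin n), ∀ t, R θ t = nu l r s k θ (π t)) :
    (∀ θ, zcount (R θ) ≤ zcount l ∧ Even (zcount l - zcount (R θ))) ∧
    (zcount l ≤ atyp l ∧ Even (atyp l - zcount l)) ∧
    ∑ θ : Fin p → Bool, 2 ^ ((zcount l - zcount (R θ)) / 2) =
      2 ^ ((atyp l - zcount l) / 2) * 3 ^ (zcount l / 2) :=
  stmt3_general n p l hl hp r s hr hs hrs hpair I k hstep R hR
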